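/- arXiv:1905.05763 — 11 statements merged into one kernel-verified Lean document; each statement's English description precedes it below -/
import Mathlib

section
/- Let (Q, ·) be a Ward quasigroup with e = x·x (independent of x). Define x ∘ y = x·(e·y). Then (Q, ∘) is a group with identity e, in which the inverse of x is e·x. -/
/-- From a Ward quasigroup (Q,·,e), the operation x ∘ y = x·(e·y) is a group
    with identity e and inverse x⁻¹ = e·x. -/
theorem ward_quasigroup_retract_group {Q : Type*} (m : Q → Q → Q) (e : Q)
    (hL : ∀ a, Function.Bijective (fun x => m a x))
    (hR : ∀ a, Function.Bijective (fun x => m x a))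
    (ward : ∀ x y z, m (m x z) (m y z) = m x y)
    (he : ∀ x, m x x = e)
    (op : Q → Q → Q) (hop : ∀ x y, op x y = m x (m e y)) :
    (∀ x y z, op (op x y) z = op x (op y z)) ∧
    (∀ x, op e x = x) ∧ (∀ x, op x e = x) ∧
    (∀ x, op x (m e x) = e) ∧ (∀ x, op (m e x) x = e) := by
  -- right identity: m a e = a
  have idr : ∀ a, m a e = a := by
    intro a
    obtain ⟨x, hx⟩ := (hR a).2 a
    simp only at hx
    have h := ward x a a
    rw [he a, hx] at h
    exact h
  -- fact A: m e (m a b) = m b a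
  have A : ∀ a b, m e (m a b) = m b a := by
    intro a b
    have h := ward b a b
    rw [he b] at h
    exact h
  -- fact B: m e (m e x) = x
  have B : ∀ x, m e (m e x) = x := by
    intro x
    rw [A e x, idr]
  -- key: m (m w y) (m e y) = w
  have key : ∀ w y, m (m w y) (m e y) = w := by
    intro w y
    have h := ward w e y
    rw [idr w] at h
    exact h
  refine ⟨?_, ?_, ?_, ?_, ?_⟩
  · intro x y z
    simp only [hop]
    rw [A y (m e z)]
    calc m (m x (m e y)) (m e z)
        = m (m x (m e y)) (m (m (m e z) y) (m e y)) := by rw [key (m e z) y]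
      _ = m x (m (m e z) y) := ward x _ (m e y)
  · intro x
    rw [hop, B]
  · intro x
    rw [hop, he e, idr]
  · intro x
    rw [hop, B, he]
  · intro x
    rw [hop]
    exact he _
end

section
/- Let (G, ∘) be a group with identity e, and define x·y = x⁻¹ ∘ y⁻¹. Then (Q, ·, e) satisfies the double Ward identity ((e·e)·(x·z))·((e·y)·z) = x·y for all x, y, z, and (Q, ·) is a quasigroup. -/
/-- From a group (G,∘), x·y = x⁻¹ ∘ y⁻¹ with e the group identity gives a
    double Ward quasigroup. -/
theorem group_gives_double_ward_quasigroup {G : Type*} [Group G]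
    (m : G → G → G) (hm : ∀ x y, m x y = x⁻¹ * y⁻¹) (e : G) (he : e = 1) :
    (∀ x y z, m (m (m e e) (m x z)) (m (m e y) z) = m x y) ∧
    (∀ a, Function.Bijective (fun x => m a x)) ∧
    (∀ a, Function.Bijective (fun x => m x a)) := by
  refine ⟨fun x y z => by simp [hm, he, mul_assoc], fun a => ?_, fun a => ?_⟩
  · simp only [hm]
    exact ⟨fun u v h => by simpa using h, fun u => ⟨(a * u)⁻¹ , by group⟩⟩
  · simp only [hm]
    exact ⟨fun u v h => by simpa using h, fun u => ⟨(u * a)⁻¹ , by group⟩⟩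
end

section
/- Let (Q, ·, e) and (Q, ∗, e*) be two Ward quasigroups on the same set. If the pair (·, ∗) satisfies the interchange law (x·y)∗(z·w) = (x∗z)·(y∗w), then the two operations coincide and the common Ward quasigroup is medial. -/
/-- If two Ward quasigroups on the same set satisfy the interchange law,
    then they coincide and are medial. -/
theorem ward_double_magma_improper {Q : Type*} (m s : Q → Q → Q) (e es : Q)
    (hmL : ∀ a, Function.Bijective (fun x => m a x))
    (hmR : ∀ a, Function.Bijective (fun x => m x a))
    (wardm : ∀ x y z, m (m x z) (m y z) = m x y)
    (hem : ∀ x, m x x = e)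
    (hsL : ∀ a, Function.Bijective (fun x => s a x))
    (hsR : ∀ a, Function.Bijective (fun x => s x a))
    (wards : ∀ x y z, s (s x z) (s y z) = s x y)
    (hes : ∀ x, s x x = es)
    (interchange : ∀ x y z w, s (m x y) (m z w) = m (s x z) (s y w)) :
    (∀ x y, m x y = s x y) ∧
    (∀ x y z w, m (m x y) (m z w) = m (m x z) (m y w)) := by
  -- e is a right unit for m
  have hmRu : ∀ a, m a e = a := by
    intro a
    obtain ⟨x, hx⟩ := (hmR e).2 a
    have h := wardm x e e
    rw [hem] at h
    simpa [hx] using h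
  -- es = e
  have hese : es = e := by
    have h := interchange e e e e
    rw [hem, hes, hem] at h
    exact h
  -- e is a right unit for s
  have hsRu : ∀ a, s a e = a := by
    intro a
    obtain ⟨x, hx⟩ := (hsR e).2 a
    have h := wards x e e
    rw [hes, hese] at h
    simpa [hx] using h
  -- mixed Ward law
  have hH : ∀ x z y, s (m x y) (m z y) = s x z := by
    intro x z y
    have h := interchange x y z y
    rw [hes, hese, hmRu] at h
    exact h
  -- the operations coincide
  have heq : ∀ x y, m x y = s x y := by
    intro x y
    have h := hH x y y
    rw [hem, hsRu] at h
    exact h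
  refine ⟨heq, ?_⟩
  intro x y z w
  have h := interchange x y z w
  rw [← heq, ← heq, ← heq] at h
  exact h
end

section
/- A Ward quasigroup (Q, ·, e) is medial if and only if it satisfies both identities (x·y)·z = (x·z)·y and x·(y·z) = (x·y)·(e·z) for all x, y, z. -/
/-- A Ward quasigroup is medial iff it satisfies (x·y)·z = (x·z)·y and
    x·(y·z) = (x·y)·(e·z). -/
theorem ward_medial_iff_two_identities {Q : Type*} (m : Q → Q → Q) (e : Q)
    (hL : ∀ a, Function.Bijective (fun x => m a x))
    (hR : ∀ a, Function.Bijective (fun x => m x a))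
    (ward : ∀ x y z, m (m x z) (m y z) = m x y)
    (he : ∀ x, m x x = e) :
    (∀ x y z w, m (m x y) (m z w) = m (m x z) (m y w)) ↔
    ((∀ x y z, m (m x y) z = m (m x z) y) ∧
     (∀ x y z, m x (m y z) = m (m x y) (m e z))) := by
  have hre : ∀ w, m w e = w := by
    intro w
    obtain ⟨b, hb⟩ := (hL w).2 w
    simp only at hb
    calc m w e = m (m w b) (m b b) := by rw [hb, he]
    _ = m w b := ward w b b
    _ = w := hb
  constructor
  · intro med
    constructor
    · intro x y z
      have := med x y z e
      rwa [hre, hre] at this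
    · intro x y z
      have := med x y e z
      rw [hre] at this
      exact this.symm
  · rintro ⟨I1, I2⟩ x y z w
    calc m (m x y) (m z w) = m (m (m x y) z) (m e w) := I2 _ _ _
    _ = m (m (m x z) y) (m e w) := congrArg (fun t => m t (m e w)) (I1 x y z)
    _ = m (m x z) (m y w) := (I2 _ _ _).symm
end

section
/- A Ward quasigroup (Q, ·, e) is medial if and only if the group ret(Q, ·, e) defined by x ∘ y = x·(e·y) is abelian. -/
/-- A Ward quasigroup is medial iff its retract group x ∘ y = x·(e·y) is abelian. -/
theorem ward_medial_iff_retract_abelian {Q : Type*} (m : Q → Q → Q) (e : Q)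
    (hL : ∀ a, Function.Bijective (fun x => m a x))
    (hR : ∀ a, Function.Bijective (fun x => m x a))
    (ward : ∀ x y z, m (m x z) (m y z) = m x y)
    (he : ∀ x, m x x = e)
    (op : Q → Q → Q) (hop : ∀ x y, op x y = m x (m e y)) :
    (∀ x y z w, m (m x y) (m z w) = m (m x z) (m y w)) ↔
    (∀ x y, op x y = op y x) := by
  have F1 : ∀ a, m a e = a := by
    intro a
    obtain ⟨x, hx⟩ := (hR a).2 a
    have hx' : m x a = a := hx
    have h := ward x a a
    rw [he, hx'] at h
    exact h
  have F2 : ∀ x y, m e (m x y) = m y x := by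
    intro x y
    have h := ward y x y
    rwa [he] at h
  have F3 : ∀ x, m e (m e x) = x := by
    intro x
    rw [F2, F1]
  have star : ∀ x y, m (m x y) (m e y) = x := by
    intro x y
    have h := ward x e y
    rwa [F1] at h
  have A : ∀ x y z, m (m x y) z = m x (m z (m e y)) := by
    intro x y z
    have h := ward (m x y) z (m e y)
    rw [star x y] at h
    exact h.symm
  constructor
  · intro med x y
    rw [hop, hop]
    calc m x (m e y) = m (m e (m e x)) (m (m e y) e) := by rw [F3, F1]
      _ = m (m e (m e y)) (m (m e x) e) := med e (m e x) (m e y) e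
      _ = m y (m e x) := by rw [F3, F1]
  · intro comm
    have C : ∀ x y, m x (m e y) = m y (m e x) := by
      intro x y
      rw [← hop, ← hop]
      exact comm x y
    have C' : ∀ x y, m x y = m (m e y) (m e x) := by
      intro x y
      have h := C x (m e y)
      rwa [F3] at h
    have key : ∀ z y w, m z (m w y) = m y (m w z) := by
      intro z y w
      rw [← F2 y w, C z (m y w), A y w (m e z), ← C' w z]
    intro x y z w
    rw [A x y (m z w), A z w (m e y), ← C' w y, A x z (m y w), A y w (m e z),
      ← C' w z, key z y w]
end

section
/- A Ward quasigroup (Q, ·, e) is commutative if and only if its retract group (with operation x ∘ y = x·(e·y)) is a boolean group, i.e., every element of the group is its own inverse. -/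
/-- A Ward quasigroup is commutative iff its retract group is boolean. -/
theorem ward_commutative_iff_retract_boolean {Q : Type*} (m : Q → Q → Q) (e : Q)
    (hL : ∀ a, Function.Bijective (fun x => m a x))
    (hR : ∀ a, Function.Bijective (fun x => m x a))
    (ward : ∀ x y z, m (m x z) (m y z) = m x y)
    (he : ∀ x, m x x = e)
    (op : Q → Q → Q) (hop : ∀ x y, op x y = m x (m e y)) :
    (∀ x y, m x y = m y x) ↔ (∀ g, op g g = e) := by
  have hre : ∀ w, m w e = w := by
    intro w
    obtain ⟨x, hx⟩ := (hR e).2 w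
    simp only at hx
    have h2 := ward x e e
    rw [he e, hx] at h2
    exact h2
  constructor
  · intro hcomm g
    rw [hop, hcomm e g, hre, he]
  · intro hb x y
    have hge : ∀ g, m e g = g := by
      intro g
      have h1 : m g (m e g) = m g g := by
        rw [he]; have := hb g; rwa [hop] at this
      exact (hL g).1 h1
    have := ward x y x
    rw [he x, hge (m y x)] at this
    exact this.symm
end

section
/- In any double Ward quasigroup (Q, ·, e) the following hold for all x, y, z: (a) e·e = e; (b) e·x = x·e; (c) (e·x)·(e·y) = e·(y·x); (d) e·((e·y)·(e·x)) = x·y; (e) (x·y)·x = y and x·(y·x) = y. -/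
/-- Basic identities of a double Ward quasigroup (Q,·,e). -/
theorem double_ward_identities {Q : Type*} (m : Q → Q → Q) (e : Q)
    (hL : ∀ a, Function.Bijective (fun x => m a x))
    (hR : ∀ a, Function.Bijective (fun x => m x a))
    (dward : ∀ x y z, m (m (m e e) (m x z)) (m (m e y) z) = m x y) :
    m e e = e ∧
    (∀ x, m e x = m x e) ∧
    (∀ x y, m (m e x) (m e y) = m e (m y x)) ∧
    (∀ x y, m e (m (m e y) (m e x)) = m x y) ∧
    (∀ x y, m (m x y) x = y) ∧
    (∀ x y, m x (m y x) = y) := by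
  have injL : ∀ a x y, m a x = m a y → x = y := fun a x y h => (hL a).1 h
  have injR : ∀ a x y, m x a = m y a → x = y := fun a x y h => (hR a).1 h
  have surL : ∀ a b, ∃ x, m a x = b := fun a b => (hL a).2 b
  have surR : ∀ a b, ∃ x, m x a = b := fun a b => (hR a).2 b
  -- (A): c_z · (u·z) = u, where c_z = (e·e)·(e·z)
  have hA : ∀ u z, m (m (m e e) (m e z)) (m u z) = u := by
    intro u z
    obtain ⟨y, hy⟩ := surL e u
    have h := dward e y z
    rw [hy] at h
    exact h
  -- (B): (c_z · w) · z = w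
  have hB : ∀ w z, m (m (m (m e e) (m e z)) w) z = w := by
    intro w z
    obtain ⟨u, hu⟩ := surR z w
    rw [← hu, hA u z, hu]
  -- (D): (e·e)·(x·z) · ((e·e)·z) = x·e
  have hD : ∀ x z, m (m (m e e) (m x z)) (m (m e e) z) = m x e := fun x z => dward x e z
  -- (E): ((e·e)·t)·((e·e)·z) = (c_z·t)·e
  have hE : ∀ t z, m (m (m e e) t) (m (m e e) z) = m (m (m (m e e) (m e z)) t) e := by
    intro t z
    have h := hD (m (m (m e e) (m e z)) t) z
    rw [hB t z] at h
    exact h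
  -- (F): ((e·e)·v) · ((e·e)·e) = v
  have hF : ∀ v, m (m (m e e) v) (m (m e e) e) = v := by
    intro v
    rw [hE v e]
    exact hB v e
  -- (F'): (e·e) · (w · ((e·e)·e)) = w
  have hF' : ∀ w, m (m e e) (m w (m (m e e) e)) = w := by
    intro w
    obtain ⟨v, hv⟩ := surL (m e e) w
    rw [← hv, hF v, hv]
  -- (H): (e·y) · ((e·e)·e) = y
  have hH : ∀ y, m (m e y) (m (m e e) e) = y := by
    intro y
    have h := dward e y (m (m e e) e)
    rw [hF' e] at h
    exact injL e _ _ h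
  -- (a): e·e = e
  have hee' : ∀ v, m (m e e) v = m e v :=
    fun v => injR (m (m e e) e) _ _ ((hF v).trans (hH v).symm)
  have hee : m e e = e := injR e _ _ (hee' e)
  simp only [hee] at hA hB hD dward
  -- (I): (e·w)·e = w
  have hI : ∀ w, m (m e w) e = w := by
    intro w
    have h := hH w
    simp only [hee] at h
    exact h
  -- (I'): e·(w·e) = w
  have hI' : ∀ w, m e (m w e) = w := by
    intro w
    obtain ⟨v, hv⟩ := surL e w
    rw [← hv, hI v, hv]
  -- (N): (x·e)·e = x
  have hN : ∀ x, m (m x e) e = x := by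
    intro x
    obtain ⟨z, hz⟩ := surL x e
    have h1 := hD x z
    rw [hz] at h1
    simp only [hee] at h1
    have h2 := hA x z
    rw [hz, h1] at h2
    exact h2
  -- (b): commutation with e
  have hcomm : ∀ x, m e x = m x e := fun x => injR e _ _ ((hI x).trans (hN x).symm)
  -- (K): e·(e·x) = x
  have hK : ∀ x, m e (m e x) = x := by
    intro x
    rw [hcomm x]
    exact hI' x
  -- (e) identities
  have he1 : ∀ x y, m (m x y) x = y := by
    intro x y
    have h := hB y x
    rw [hK x] at h
    exact h
  have he2 : ∀ x y, m x (m y x) = y := by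
    intro x y
    have h := hA y x
    rw [hK x] at h
    exact h
  -- (c)
  have hc : ∀ x y, m (m e x) (m e y) = m e (m y x) := by
    intro x y
    have h := hD (m y x) y
    rw [he1 y x, ← hcomm (m y x)] at h
    exact h
  -- (d)
  have hd : ∀ x y, m e (m (m e y) (m e x)) = m x y := by
    intro x y
    rw [hc y x, hK]
  exact ⟨hee, hcomm, hc, hd, he1, he2⟩
end

section
/- Let (Q, ·, e) be a Ward quasigroup and define x ⋆ y = (e·x)·y. Then (Q, ⋆, e) is a double Ward quasigroup, i.e., it satisfies ((e⋆e)⋆(x⋆z))⋆((e⋆y)⋆z) = x⋆y for all x, y, z. -/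
/-- From a Ward quasigroup (Q,·,e), x ⋆ y = (e·x)·y gives a double Ward
    quasigroup. -/
theorem ward_gives_double_ward {Q : Type*} (m : Q → Q → Q) (e : Q)
    (hL : ∀ a, Function.Bijective (fun x => m a x))
    (hR : ∀ a, Function.Bijective (fun x => m x a))
    (ward : ∀ x y z, m (m x z) (m y z) = m x y)
    (he : ∀ x, m x x = e)
    (star : Q → Q → Q) (hstar : ∀ x y, star x y = m (m e x) y) :
    (∀ x y z, star (star (star e e) (star x z)) (star (star e y) z) = star x y) ∧
    (∀ a, Function.Bijective (fun x => star a x)) ∧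
    (∀ a, Function.Bijective (fun x => star x a)) := by
  -- Key identity A : m e (m y x) = m x y
  have hA : ∀ x y, m e (m y x) = m x y := by
    intro x y
    have := ward x y x
    rwa [he x] at this
  -- m e e = e
  have hB : m e e = e := by
    have := hA e e
    rwa [he e] at this
  -- m y e = y
  have hC : ∀ y, m y e = y := by
    intro y
    have h1 : m e (m y e) = m e y := hA e y
    exact (hL e).1 h1
  -- m e (m e x) = x
  have hD : ∀ x, m e (m e x) = x := by
    intro x
    have := hA x e
    rwa [hC x] at this
  refine ⟨?_, ?_, ?_⟩
  · intro x y z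
    have h1 : star e e = e := by rw [hstar, hB, hB]
    have h2 : star e (star x z) = m z (m e x) := by
      rw [hstar, hB, hstar, hA]
    have h3 : star (star e y) z = m y z := by
      rw [hstar, hstar, hB, hD]
    rw [h1, h2, h3, hstar, hA, ward, ← hstar]
  · intro a
    have : (fun x => star a x) = (fun x => m (m e a) x) := by
      funext x; exact hstar a x
    rw [this]; exact hL (m e a)
  · intro a
    have : (fun x => star x a) = (fun x => m x a) ∘ (fun x => m e x) := by
      funext x; exact hstar x a
    rw [this]; exact (hR a).comp (hL e)
end

section
/- Let (Q, ⋆, e) be a double Ward quasigroup and define x • y = (e⋆x)⋆y. Then (Q, •) is a Ward quasigroup: (x•z)•(y•z) = x•y for all x, y, z. -/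
/-- From a double Ward quasigroup (Q,⋆,e), x • y = (e⋆x)⋆y gives a Ward
    quasigroup. -/
theorem double_ward_gives_ward {Q : Type*} (s : Q → Q → Q) (e : Q)
    (hL : ∀ a, Function.Bijective (fun x => s a x))
    (hR : ∀ a, Function.Bijective (fun x => s x a))
    (dward : ∀ x y z, s (s (s e e) (s x z)) (s (s e y) z) = s x y)
    (b : Q → Q → Q) (hb : ∀ x y, b x y = s (s e x) y) :
    (∀ x y z, b (b x z) (b y z) = b x y) ∧
    (∀ a, Function.Bijective (fun x => b a x)) ∧
    (∀ a, Function.Bijective (fun x => b x a)) := by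
  set f := s e e with hf
  -- (5): ∀ t, s (s f t) (s f e) = t
  have h5 : ∀ t, s (s f t) (s f e) = t := by
    intro t
    obtain ⟨x, hx⟩ := (hR e).2 t
    simp only at hx
    have := dward x e e
    rw [hx] at this
    exact this
  -- (L1): ∀ t, s f (s t (s f e)) = t
  have hL1 : ∀ t, s f (s t (s f e)) = t := by
    intro t
    apply (hR (s f e)).1
    simp only
    exact h5 (s t (s f e))
  -- (K'): ∀ Y, s e (s Y (s f e)) = Y
  have hK' : ∀ Y, s e (s Y (s f e)) = Y := by
    intro Y
    obtain ⟨y, hy⟩ := (hL e).2 Y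
    simp only at hy
    have := dward e y (s f e)
    rw [hL1 e, hy] at this
    exact this
  -- (K): ∀ w, s e w = s f w
  have hK : ∀ w, s e w = s f w := by
    intro w
    obtain ⟨t, ht⟩ := (hR (s f e)).2 w
    simp only at ht
    rw [← ht, hK' t, hL1 t]
  refine ⟨?_, ?_, ?_⟩
  · intro x y z
    simp only [hb]
    have := dward (s e x) y z
    rw [← hK] at this
    exact this
  · intro a
    have : (fun x => b a x) = (fun x => s (s e a) x) := by
      funext x; exact hb a x
    rw [this]
    exact hL (s e a)
  · intro a
    have : (fun x => b x a) = (fun x => s x a) ∘ (fun x => s e x) := by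
      funext x; exact hb x a
    rw [this]
    exact (hR a).comp (hL e)
end

section
/- Any double Ward quasigroup (Q, ·, e) forms a lateral double magma with the group operation x ◊ y = (e·x)·(e·y); that is, (x·y) ◊ (z·w) = (y ◊ x)·(w ◊ z) for all x, y, z, w. -/
/-- A double Ward quasigroup forms a lateral double magma with its retract
    group x ◊ y = (e·x)·(e·y). -/
theorem double_ward_lateral_with_retract {Q : Type*} (m : Q → Q → Q) (e : Q)
    (hL : ∀ a, Function.Bijective (fun x => m a x))
    (hR : ∀ a, Function.Bijective (fun x => m x a))
    (dward : ∀ x y z, m (m (m e e) (m x z)) (m (m e y) z) = m x y)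
    (d : Q → Q → Q) (hd : ∀ x y, d x y = m (m e x) (m e y)) :
    ∀ x y z w, d (m x y) (m z w) = m (d y x) (d w z) := by
  have Linj : ∀ a x y, m a x = m a y → x = y := fun a x y h => (hL a).1 h
  have Rinj : ∀ a x y, m x a = m y a → x = y := fun a x y h => (hR a).1 h
  have Lsurj : ∀ a u, ∃ x, m a x = u := fun a u => (hL a).2 u
  -- B : left multiplication by (ee)(ez) inverts right multiplication by z
  have B : ∀ z u, m (m (m e e) (m e z)) (m u z) = u := by
    intro z u
    obtain ⟨y, hy⟩ := Lsurj e u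
    have h := dward e y z
    rwa [hy] at h
  -- B' : the other composition is also the identity
  have B' : ∀ z u, m (m (m (m e e) (m e z)) u) z = u := by
    intro z u
    exact Linj (m (m e e) (m e z)) _ _ (B z (m (m (m e e) (m e z)) u))
  -- A1
  have A1 : ∀ u y z, m (m (m e e) u) (m (m e y) z) = m (m (m (m e e) (m e z)) u) y := by
    intro u y z
    have h := dward (m (m (m e e) (m e z)) u) y z
    rwa [B' z u] at h
  -- K : (f u) u = e  where f = e e
  have K : ∀ u, m (m (m e e) u) u = e := by
    intro u
    obtain ⟨z, hz⟩ := Lsurj e u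
    have h := B z e
    rwa [hz] at h
  -- C : g (u e) = u where g = f f
  have C : ∀ u, m (m (m e e) (m e e)) (m u e) = u := fun u => B e u
  have II' : ∀ u, m (m (m (m e e) (m e e)) u) e = u := by
    intro u
    exact Linj (m (m e e) (m e e)) _ _ (C (m (m (m e e) (m e e)) u))
  -- L : (f u) (f e) = u
  have L : ∀ u, m (m (m e e) u) (m (m e e) e) = u := by
    intro u
    have h := A1 u e e
    rwa [II' u] at h
  have h1 : m (m (m e e) e) (m (m e e) e) = e := L e
  have h2 : m (m e e) (m (m e e) e) = m (m e e) e :=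
    Rinj (m (m e e) e) _ _ ((K (m (m e e) e)).trans h1.symm)
  have h3 : m (m (m e e) e) (m (m e e) e) = m (m e e) e := by
    have h := L (m (m e e) e)
    rwa [h2] at h
  have hfe : m (m e e) e = e := h3.symm.trans h1
  have L' : ∀ u, m (m (m e e) u) e = u := by
    intro u
    have h := L u
    rwa [hfe] at h
  have gf : ∀ v, m (m (m e e) (m e e)) v = m (m e e) v := by
    intro v
    have h := C (m (m e e) v)
    rwa [L' v] at h
  have hff : m (m e e) (m e e) = m e e := Rinj e _ _ (gf e)
  have hee : m e e = e := by
    have h := K (m e e)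
    rw [hff] at h
    exact hff.symm.trans h
  -- restatements with e e = e
  have A1' : ∀ u y z, m (m e u) (m (m e y) z) = m (m (m e (m e z)) u) y := by
    intro u y z
    have h := A1 u y z
    rwa [hee] at h
  have C' : ∀ u, m e (m u e) = u := by
    intro u
    have h := C u
    rwa [hee, hee] at h
  have L'' : ∀ u, m (m e u) e = u := by
    intro u
    have h := L' u
    rwa [hee] at h
  -- N : e ((e u)(e z)) = (e (e z)) u
  have N : ∀ u z, m e (m (m e u) (m e z)) = m (m e (m e z)) u := by
    intro u z
    have h := A1' u e z
    rw [hee] at h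
    have h2 := C' (m (m e (m e z)) u)
    rw [← h] at h2
    exact h2
  -- P : e (e z) = z
  have P : ∀ z, m e (m e z) = z := by
    intro z
    have h := N e z
    rw [hee, L'' (m e z)] at h
    exact Linj e _ _ h
  -- star3 : e (x y) = (e y)(e x)
  have star3 : ∀ x y, m e (m x y) = m (m e y) (m e x) := by
    intro x y
    have h := N (m e x) (m e y)
    rw [P x, P (m e y), P y] at h
    exact h
  intro x y z w
  simp only [hd]
  rw [star3 x y, star3 z w]
end

section
/- The dual of a double Ward quasigroup is a double Ward quasigroup: if (Q, ·, e) satisfies ((e·e)·(x·z))·((e·y)·z) = x·y, then the operation x ⊛ y = y·x with the same element e satisfies ((e⊛e)⊛(x⊛z))⊛((e⊛y)⊛z) = x⊛y. -/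
/-- The dual of a double Ward quasigroup is a double Ward quasigroup. -/
theorem double_ward_dual {Q : Type*} (m : Q → Q → Q) (e : Q)
    (hL : ∀ a, Function.Bijective (fun x => m a x))
    (hR : ∀ a, Function.Bijective (fun x => m x a))
    (dward : ∀ x y z, m (m (m e e) (m x z)) (m (m e y) z) = m x y)
    (s : Q → Q → Q) (hs : ∀ x y, s x y = m y x) :
    ∀ x y z, s (s (s e e) (s x z)) (s (s e y) z) = s x y := by
  -- E1 : for all t, m (m (m e e) t) (m (m e e) e) = t
  have hE1 : ∀ t, m (m (m e e) t) (m (m e e) e) = t := by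
    intro t
    obtain ⟨x, hx⟩ := (hR e).2 t
    have hx' : m x e = t := hx
    have h := dward x e e
    rwa [hx'] at h
  -- E2 : for all t, m (m e e) (m t (m (m e e) e)) = t
  have hE2 : ∀ t, m (m e e) (m t (m (m e e) e)) = t := by
    intro t
    exact (hR (m (m e e) e)).1 (hE1 (m t (m (m e e) e)))
  -- F : for all y, m (m e y) (m (m e e) e) = y
  have hF : ∀ y, m (m e y) (m (m e e) e) = y := by
    intro y
    have h := dward e y (m (m e e) e)
    rw [hE2 e] at h
    exact (hL e).1 h
  -- u = e
  have h2 : ∀ y, m (m e e) y = m e y := fun y => (hR _).1 ((hE1 y).trans (hF y).symm)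
  have hu : m e e = e := (hR e).1 (h2 e)
  -- D' : for all t, m e (m t e) = t
  have hD' : ∀ t, m e (m t e) = t := by
    intro t
    have h := hE2 t
    rwa [hu, hu] at h
  -- H1 : the dward law with m e e = e simplified
  have H1 : ∀ a b c, m (m e (m a c)) (m (m e b) c) = m a b := by
    intro a b c
    have h := dward a b c
    rwa [hu] at h
  -- A' : left cancellation law
  have A' : ∀ c w, m (m e (m e c)) (m w c) = w := by
    intro c w
    obtain ⟨b, hb⟩ := (hL e).2 w
    have hb' : m e b = w := hb
    have h := H1 e b c
    rwa [hb'] at h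
  -- K2 : the companion cancellation
  have K2 : ∀ c w, m (m (m e (m e c)) w) c = w := by
    intro c w
    exact (hL (m e (m e c))).1 (A' c (m (m e (m e c)) w))
  intro x y z
  simp only [hs]
  -- goal : m (m z (m y e)) (m (m z x) (m e e)) = m y x
  rw [hu]
  obtain ⟨a, ha⟩ := (hL e).2 z
  have ha' : m e a = z := ha
  obtain ⟨g, hg⟩ := (hL e).2 a
  have hg' : m e g = a := hg
  have hz : m e (m e g) = z := by rw [hg', ha']
  have K2' : ∀ w, m (m z w) g = w := by
    intro w
    have h := K2 g w
    rwa [hz] at h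
  have h := H1 (m z (m y e)) (m (m z x) e) g
  rw [K2' (m y e), hD' y, hD' (m z x), K2' x] at h
  exact h.symm
end
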